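/- arXiv:1312.3582 — 3 statements merged into one kernel-verified Lean document; each statement's English description precedes it below -/
import Mathlib

section
/- Let u, v ∈ C^N with ‖supp(u) ∪ supp(v)‖_{ω,0} ≤ t, and suppose A has ω-RIP constant δ_{ω,t}. Then |⟨u, (I − A*A)v⟩| ≤ δ_{ω,t} ‖u‖₂ ‖v‖₂. -/
open Finset

/-- ℓ2 norm of a finitely-indexed complex vector. -/
noncomputable def l2 {n : ℕ} (x : Fin n → ℂ) : ℝ := Real.sqrt (∑ j, ‖x j‖ ^ 2)

/-- ℓ1 norm. -/
noncomputable def l1 {n : ℕ} (x : Fin n → ℂ) : ℝ := ∑ j, ‖x j‖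

/-- Support of a vector as a finset. -/
noncomputable def spt {n : ℕ} (x : Fin n → ℂ) : Finset (Fin n) := Finset.univ.filter (fun j => x j ≠ 0)

/-- Weighted ℓ0 "norm" ‖x‖_{ω,0} = ∑_{j : x_j ≠ 0} ω_j². -/
noncomputable def wnorm0 {n : ℕ} (ω : Fin n → ℝ) (x : Fin n → ℂ) : ℝ :=
  ∑ j ∈ spt x, (ω j) ^ 2

/-- Weighted ℓ1 norm ‖x‖_{ω,1} = ∑_j |x_j| ω_j. -/
noncomputable def wl1 {n : ℕ} (ω : Fin n → ℝ) (x : Fin n → ℂ) : ℝ := ∑ j, ‖x j‖ * ω j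

/-- Weighted cardinality of an index set. -/
noncomputable def wcard {n : ℕ} (ω : Fin n → ℝ) (S : Finset (Fin n)) : ℝ := ∑ j ∈ S, (ω j) ^ 2

/-- Restriction of a vector to an index set (zeroing the other coordinates). -/
def restr {n : ℕ} (S : Finset (Fin n)) (x : Fin n → ℂ) : Fin n → ℂ :=
  fun j => if j ∈ S then x j else 0

/-!
On every vector supported in `supp u ∪ supp v` the RIP bounds the quadratic form of the
self-adjoint operator `T = I - A*A` by `δ‖z‖²`, and this support condition is preserved by the
span of `u` and `v`. Polarization and the parallelogram law turn the bound on the quadratic form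
into `2 Re⟨x, T y⟩ ≤ δ (‖x‖² + ‖y‖²)` on that span; rescaling `x` and `y` to equal norms and
rotating `v` by a unimodular scalar gives `|⟨u, T v⟩| ≤ δ ‖u‖ ‖v‖`.
-/

open Matrix RCLike
open scoped InnerProductSpace

section SymmetricOperator

variable {𝕜 E : Type*} [RCLike 𝕜] [NormedAddCommGroup E] [InnerProductSpace 𝕜 E]
  {T : E →ₗ[𝕜] E}

lemma LinearMap.IsSymmetric.four_mul_re_inner_eq (hT : T.IsSymmetric) (x y : E) :
    4 * re ⟪x, T y⟫_𝕜 = re ⟪x + y, T (x + y)⟫_𝕜 - re ⟪x - y, T (x - y)⟫_𝕜 := by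
  have hswap : re ⟪y, T x⟫_𝕜 = re ⟪x, T y⟫_𝕜 := by
    rw [← hT, ← inner_conj_symm, conj_re]
  simp only [map_add, map_sub, inner_add_left, inner_add_right, inner_sub_left, inner_sub_right]
  linarith

variable {V : Submodule 𝕜 E} {δ : ℝ}

lemma LinearMap.IsSymmetric.two_mul_re_inner_le (hT : T.IsSymmetric)
    (hV : ∀ z ∈ V, |re ⟪z, T z⟫_𝕜| ≤ δ * ‖z‖ ^ 2) {x y : E} (hx : x ∈ V) (hy : y ∈ V) :
    2 * re ⟪x, T y⟫_𝕜 ≤ δ * (‖x‖ ^ 2 + ‖y‖ ^ 2) := by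
  have hadd := (abs_le.mp (hV _ (V.add_mem hx hy))).2
  have hsub := (abs_le.mp (hV _ (V.sub_mem hx hy))).1
  have hpar := parallelogram_law_with_norm 𝕜 x y
  have hpol := hT.four_mul_re_inner_eq x y
  have hδ : δ * ‖x + y‖ ^ 2 + δ * ‖x - y‖ ^ 2 = 2 * (δ * (‖x‖ ^ 2 + ‖y‖ ^ 2)) := by
    rw [← mul_add, hpar]; ring
  linarith

lemma LinearMap.IsSymmetric.re_inner_le (hT : T.IsSymmetric)
    (hV : ∀ z ∈ V, |re ⟪z, T z⟫_𝕜| ≤ δ * ‖z‖ ^ 2) {x y : E} (hx : x ∈ V) (hy : y ∈ V) :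
    re ⟪x, T y⟫_𝕜 ≤ δ * ‖x‖ * ‖y‖ := by
  rcases eq_or_ne x 0 with rfl | hx0
  · simp
  rcases eq_or_ne y 0 with rfl | hy0
  · simp
  have hpos : 0 < ‖x‖ * ‖y‖ := by positivity
  -- rescale to `‖y‖ • x` and `‖x‖ • y`, which have equal norms, so that AM-GM is an equality
  have h := hT.two_mul_re_inner_le hV (V.smul_mem (‖y‖ : 𝕜) hx) (V.smul_mem (‖x‖ : 𝕜) hy)
  simp only [map_smul, inner_smul_left, inner_smul_right, conj_ofReal, norm_smul, norm_ofReal,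
    abs_norm, re_ofReal_mul] at h
  nlinarith

theorem LinearMap.IsSymmetric.norm_inner_le (hT : T.IsSymmetric)
    (hV : ∀ z ∈ V, |re ⟪z, T z⟫_𝕜| ≤ δ * ‖z‖ ^ 2) {u v : E} (hu : u ∈ V) (hv : v ∈ V) :
    ‖⟪u, T v⟫_𝕜‖ ≤ δ * ‖u‖ * ‖v‖ := by
  obtain ⟨c, hc_norm, hc⟩ := exists_norm_eq_mul_self ⟪u, T v⟫_𝕜
  have h := hT.re_inner_le hV hu (V.smul_mem c hv)
  rwa [map_smul, inner_smul_right, ← hc, ofReal_re, norm_smul, hc_norm, one_mul] at h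

end SymmetricOperator

lemma re_inner_toEuclideanLin_one_sub_conjTranspose_mul_self {𝕜 m n : Type*} [RCLike 𝕜]
    [Fintype m] [DecidableEq m] [Fintype n] [DecidableEq n] (A : Matrix m n 𝕜)
    (z : EuclideanSpace 𝕜 n) :
    re ⟪z, (1 - Aᴴ * A).toEuclideanLin z⟫_𝕜 = ‖z‖ ^ 2 - ‖A.toEuclideanLin z‖ ^ 2 := by
  rw [map_sub, toLpLin_one, toLpLin_mul 2 2, toEuclideanLin_conjTranspose_eq_adjoint]
  simp [inner_sub_right, LinearMap.adjoint_inner_right]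

lemma l2_eq_norm_toLp {n : ℕ} (x : Fin n → ℂ) : l2 x = ‖WithLp.toLp 2 x‖ := by
  rw [l2, EuclideanSpace.norm_eq]

lemma spt_smul_add_smul_subset {n : ℕ} (a b : ℂ) (u v : Fin n → ℂ) :
    spt (a • u + b • v) ⊆ spt u ∪ spt v := by
  intro j
  simp only [spt, mem_union, mem_filter, mem_univ, true_and]
  contrapose!
  rintro ⟨hu, hv⟩
  simp [hu, hv]

lemma wnorm0_le_wcard_of_spt_subset {n : ℕ} (ω : Fin n → ℝ) {x : Fin n → ℂ}
    {S : Finset (Fin n)} (h : spt x ⊆ S) : wnorm0 ω x ≤ wcard ω S :=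
  sum_le_sum_of_subset_of_nonneg h fun _ _ _ => sq_nonneg _

theorem wrip_inner_bound_general {m N : ℕ} (A : Matrix (Fin m) (Fin N) ℂ)
    (ω : Fin N → ℝ) (t δ : ℝ)
    (hRIP : ∀ z : Fin N → ℂ, wnorm0 ω z ≤ t →
      (1 - δ) * l2 z ^ 2 ≤ l2 (A.mulVec z) ^ 2 ∧ l2 (A.mulVec z) ^ 2 ≤ (1 + δ) * l2 z ^ 2)
    (u v : Fin N → ℂ) (hsupp : wcard ω (spt u ∪ spt v) ≤ t) :
    ‖∑ j, (starRingEnd ℂ) (u j) * (v j - (A.conjTranspose.mulVec (A.mulVec v)) j)‖ ≤ δ * l2 u * l2 v := by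
  set T := (1 - Aᴴ * A).toEuclideanLin
  have hT : T.IsSymmetric :=
    isSymmetric_toEuclideanLin_iff.mpr (isHermitian_one.sub (isHermitian_conjTranspose_mul_self A))
  have hform : ∀ z ∈ Submodule.span ℂ {WithLp.toLp 2 u, WithLp.toLp 2 v},
      |re ⟪z, T z⟫_ℂ| ≤ δ * ‖z‖ ^ 2 := by
    intro z hz
    obtain ⟨a, b, rfl⟩ := Submodule.mem_span_pair.mp hz
    obtain ⟨hlow, hup⟩ := hRIP (a • u + b • v)
      ((wnorm0_le_wcard_of_spt_subset ω (spt_smul_add_smul_subset a b u v)).trans hsupp)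
    rw [l2_eq_norm_toLp, l2_eq_norm_toLp] at hlow hup
    rw [show a • WithLp.toLp 2 u + b • WithLp.toLp 2 v = WithLp.toLp 2 (a • u + b • v) from rfl,
      re_inner_toEuclideanLin_one_sub_conjTranspose_mul_self, toLpLin_toLp, toLin'_apply, abs_le]
    constructor <;> linarith
  have hinner : ∑ j, (starRingEnd ℂ) (u j) * (v j - (Aᴴ *ᵥ (A *ᵥ v)) j) =
      ⟪WithLp.toLp 2 u, T (WithLp.toLp 2 v)⟫_ℂ := by
    simp [T, toLpLin_toLp, EuclideanSpace.inner_toLp_toLp, dotProduct, mulVec_mulVec,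
      mul_comm, sub_mul]
  rw [hinner, l2_eq_norm_toLp, l2_eq_norm_toLp]
  exact hT.norm_inner_le hform (Submodule.subset_span (by simp)) (Submodule.subset_span (by simp))

/-- |⟨u, (I − A*A)v⟩| ≤ δ_{ω,t} ‖u‖₂ ‖v‖₂ when ω(supp u ∪ supp v) ≤ t. -/
theorem wrip_inner_bound {m N : ℕ} (A : Matrix (Fin m) (Fin N) ℂ)
    (ω : Fin N → ℝ) (hω : ∀ j, 1 ≤ ω j) (t δ : ℝ)
    (hRIP : ∀ z : Fin N → ℂ, wnorm0 ω z ≤ t →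
      (1 - δ) * l2 z ^ 2 ≤ l2 (A.mulVec z) ^ 2 ∧ l2 (A.mulVec z) ^ 2 ≤ (1 + δ) * l2 z ^ 2)
    (u v : Fin N → ℂ) (hsupp : wcard ω (spt u ∪ spt v) ≤ t) :
    ‖∑ j, (starRingEnd ℂ) (u j) * (v j - (A.conjTranspose.mulVec (A.mulVec v)) j)‖ ≤ δ * l2 u * l2 v :=
  wrip_inner_bound_general A ω t δ hRIP u v hsupp
end

section
/- Let v ∈ C^N and S ⊆ [N] with ‖S ∪ supp(v)‖_{ω,0} ≤ t, and suppose A has ω-RIP constant δ_{ω,t}. Then ‖((I − A*A)v)_S‖₂ ≤ δ_{ω,t} ‖v‖₂. -/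
open Finset

/-! Put `u = ((I - A*A)v)_S`. As `u` is a restriction of `(I - A*A)v`,
`‖u‖² = Re⟨u, v⟩ - Re⟨Au, Av⟩`. Both `u` and `v` lie in the subspace of vectors supported on
`S ∪ supp v`, on which `A` is a `δ`-near isometry; polarization applied to `‖v‖u ± ‖u‖v` bounds
`Re⟨u, v⟩ - Re⟨Au, Av⟩` by `δ‖u‖‖v‖`, whence `‖u‖ ≤ δ‖v‖`. -/

section RestrictedIsometry

variable {𝕜 E F : Type*} [RCLike 𝕜] [NormedAddCommGroup E] [InnerProductSpace 𝕜 E]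
  [NormedAddCommGroup F] [InnerProductSpace 𝕜 F] {T : E →ₗ[𝕜] F} {V : Submodule 𝕜 E} {δ : ℝ}

local notation "⟪" x ", " y "⟫" => inner 𝕜 x y

theorem re_inner_sub_re_inner_map_le_of_norm_eq {x y : E} (hxy : ‖x‖ = ‖y‖)
    (hadd : (1 - δ) * ‖x + y‖ ^ 2 ≤ ‖T (x + y)‖ ^ 2)
    (hsub : ‖T (x - y)‖ ^ 2 ≤ (1 + δ) * ‖x - y‖ ^ 2) :
    RCLike.re ⟪x, y⟫ - RCLike.re ⟪T x, T y⟫ ≤ δ * (‖x‖ * ‖y‖) := by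
  rw [map_add] at hadd
  rw [map_sub] at hsub
  rw [norm_add_sq (𝕜 := 𝕜), norm_add_sq (𝕜 := 𝕜)] at hadd
  rw [norm_sub_sq (𝕜 := 𝕜), norm_sub_sq (𝕜 := 𝕜)] at hsub
  rw [← hxy] at hadd hsub ⊢
  linarith

theorem re_inner_sub_re_inner_map_le
    (hV : ∀ z ∈ V, (1 - δ) * ‖z‖ ^ 2 ≤ ‖T z‖ ^ 2 ∧ ‖T z‖ ^ 2 ≤ (1 + δ) * ‖z‖ ^ 2)
    {x y : E} (hx : x ∈ V) (hy : y ∈ V) :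
    RCLike.re ⟪x, y⟫ - RCLike.re ⟪T x, T y⟫ ≤ δ * (‖x‖ * ‖y‖) := by
  rcases eq_or_ne x 0 with rfl | hx0
  · simp
  rcases eq_or_ne y 0 with rfl | hy0
  · simp
  -- rescale to equal norms, where the polarization bound applies
  set x' := (‖y‖ : 𝕜) • x
  set y' := (‖x‖ : 𝕜) • y
  have hx' : x' ∈ V := V.smul_mem _ hx
  have hy' : y' ∈ V := V.smul_mem _ hy
  have hnorm : ‖x'‖ = ‖y'‖ := by
    simp only [x', y', norm_smul, RCLike.norm_ofReal, abs_norm, mul_comm]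
  have key := re_inner_sub_re_inner_map_le_of_norm_eq (T := T) hnorm
    (hV _ (V.add_mem hx' hy')).1 (hV _ (V.sub_mem hx' hy')).2
  have hpos : 0 < ‖x‖ * ‖y‖ := mul_pos (norm_pos_iff.2 hx0) (norm_pos_iff.2 hy0)
  simp only [x', y', map_smul, inner_smul_left, inner_smul_right, RCLike.conj_ofReal, norm_smul,
    RCLike.norm_ofReal, abs_norm, ← mul_assoc, ← RCLike.ofReal_mul, RCLike.re_ofReal_mul] at key
  refine le_of_mul_le_mul_left ?_ hpos
  linear_combination key

theorem mul_norm_nonneg_of_rip {x : E}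
    (hx : (1 - δ) * ‖x‖ ^ 2 ≤ ‖T x‖ ^ 2 ∧ ‖T x‖ ^ 2 ≤ (1 + δ) * ‖x‖ ^ 2) :
    0 ≤ δ * ‖x‖ := by
  rcases (norm_nonneg x).eq_or_lt with hx0 | hx0
  · simp [← hx0]
  exact nonneg_of_mul_nonneg_left (by nlinarith) hx0

end RestrictedIsometry

def supportedIn (𝕜 : Type*) [RCLike 𝕜] {ι : Type*} (s : Finset ι) :
    Submodule 𝕜 (EuclideanSpace 𝕜 ι) where
  carrier := {z | ∀ j ∉ s, z j = 0}
  add_mem' hz hw j hj := by simp [hz j hj, hw j hj]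
  zero_mem' _ _ := rfl
  smul_mem' c z hz j hj := by simp [hz j hj]

theorem supportedIn_mono {𝕜 ι : Type*} [RCLike 𝕜] {s s' : Finset ι} (h : s ⊆ s') :
    supportedIn 𝕜 s ≤ supportedIn 𝕜 s' :=
  fun _ hz j hj => hz j fun hjs => hj (h hjs)

section SparseVectors

variable {n : ℕ}

theorem l2_eq_norm (x : Fin n → ℂ) : l2 x = ‖WithLp.toLp 2 x‖ :=
  (EuclideanSpace.norm_eq _).symm

theorem wnorm0_le_of_mem_supportedIn (ω : Fin n → ℝ) {s : Finset (Fin n)}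
    {z : EuclideanSpace ℂ (Fin n)} (hz : z ∈ supportedIn ℂ s) :
    wnorm0 ω z.ofLp ≤ wcard ω s := by
  refine sum_le_sum_of_subset_of_nonneg (fun j hj => ?_) fun _ _ _ => sq_nonneg _
  by_contra hjs
  exact (mem_filter.1 hj).2 (hz j hjs)

theorem toLp_mem_supportedIn_spt (x : Fin n → ℂ) : WithLp.toLp 2 x ∈ supportedIn ℂ (spt x) :=
  fun j hj => by simpa [spt] using hj

theorem toLp_restr_mem_supportedIn (s : Finset (Fin n)) (x : Fin n → ℂ) :
    WithLp.toLp 2 (restr s x) ∈ supportedIn ℂ s :=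
  fun _ hj => if_neg hj

theorem re_inner_toLp_restr (s : Finset (Fin n)) (x : Fin n → ℂ) :
    RCLike.re (inner ℂ (WithLp.toLp 2 (restr s x)) (WithLp.toLp 2 x)) =
      ‖WithLp.toLp 2 (restr s x)‖ ^ 2 := by
  rw [← inner_self_eq_norm_sq (𝕜 := ℂ)]
  congr 1
  refine sum_congr rfl fun j _ => ?_
  by_cases hj : j ∈ s <;> simp [restr, hj]

end SparseVectors

theorem wrip_restriction_bound_general {m N : ℕ} (A : Matrix (Fin m) (Fin N) ℂ)
    (ω : Fin N → ℝ) (t δ : ℝ)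
    (hRIP : ∀ z : Fin N → ℂ, wnorm0 ω z ≤ t →
      (1 - δ) * l2 z ^ 2 ≤ l2 (A.mulVec z) ^ 2 ∧ l2 (A.mulVec z) ^ 2 ≤ (1 + δ) * l2 z ^ 2)
    (v : Fin N → ℂ) (S : Finset (Fin N)) (hsupp : wcard ω (S ∪ spt v) ≤ t) :
    l2 (restr S (fun j => v j - (A.conjTranspose.mulVec (A.mulVec v)) j)) ≤ δ * l2 v := by
  set T := Matrix.toEuclideanLin A
  set V := supportedIn ℂ (S ∪ spt v)
  have hV : ∀ z ∈ V, (1 - δ) * ‖z‖ ^ 2 ≤ ‖T z‖ ^ 2 ∧ ‖T z‖ ^ 2 ≤ (1 + δ) * ‖z‖ ^ 2 :=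
    fun z hz => by
      have h := hRIP z.ofLp ((wnorm0_le_of_mem_supportedIn ω hz).trans hsupp)
      simp only [l2_eq_norm, WithLp.toLp_ofLp] at h
      exact h
  set x := WithLp.toLp 2 v
  set w := WithLp.toLp 2 (fun j => v j - (A.conjTranspose.mulVec (A.mulVec v)) j)
  set u := WithLp.toLp 2 (restr S (fun j => v j - (A.conjTranspose.mulVec (A.mulVec v)) j))
  have hx : x ∈ V := supportedIn_mono subset_union_right (toLp_mem_supportedIn_spt v)
  have hu : u ∈ V := supportedIn_mono subset_union_left (toLp_restr_mem_supportedIn S _)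
  have hw : w = x - LinearMap.adjoint T (T x) := by
    rw [← Matrix.toEuclideanLin_conjTranspose_eq_adjoint]; rfl
  have hnorm_sq : ‖u‖ ^ 2 = RCLike.re (inner ℂ u x) - RCLike.re (inner ℂ (T u) (T x)) := by
    rw [← re_inner_toLp_restr]
    change RCLike.re (inner ℂ u w) = _
    rw [hw, inner_sub_right, map_sub, LinearMap.adjoint_inner_right]
  have hbound := re_inner_sub_re_inner_map_le hV hu hx
  have hδ := mul_norm_nonneg_of_rip (hV x hx)
  rw [l2_eq_norm, l2_eq_norm]
  nlinarith [norm_nonneg u]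

/-- ‖((I − A*A)v)_S‖₂ ≤ δ_{ω,t} ‖v‖₂ when ω(S ∪ supp v) ≤ t. -/
theorem wrip_restriction_bound {m N : ℕ} (A : Matrix (Fin m) (Fin N) ℂ)
    (ω : Fin N → ℝ) (hω : ∀ j, 1 ≤ ω j) (t δ : ℝ)
    (hRIP : ∀ z : Fin N → ℂ, wnorm0 ω z ≤ t →
      (1 - δ) * l2 z ^ 2 ≤ l2 (A.mulVec z) ^ 2 ∧ l2 (A.mulVec z) ^ 2 ≤ (1 + δ) * l2 z ^ 2)
    (v : Fin N → ℂ) (S : Finset (Fin N)) (hsupp : wcard ω (S ∪ spt v) ≤ t) :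
    l2 (restr S (fun j => v j - (A.conjTranspose.mulVec (A.mulVec v)) j)) ≤ δ * l2 v :=
  wrip_restriction_bound_general A ω t δ hRIP v S hsupp
end

section
/- Let weights ω satisfy ω_j ≥ 1 and let S₁,...,S_p be a partition of [N] with s − ‖ω‖_∞² ≤ ω(S_l) ≤ s, formed by nonincreasing rearrangement of |x_j|ω_j^{-1} (i.e., |x_j|ω_j^{-1} ≤ |x_k|ω_k^{-1} for all j ∈ S_l, k ∈ S_{l−1}). If s ≥ 2‖ω‖_∞², then for every l ≥ 2, ‖x_{S_l}‖₂ ≤ (2/√s) ‖x_{S_{l−1}}‖_{ω,1}. -/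
open Finset

/-!
If every |x_j|/ω_j on the block S_l is at most every |x_k|/ω_k on S_{l-1}, then averaging over
S_{l-1} with weights ω_k² gives |x_j| ≤ ω_j ‖x_{S_{l-1}}‖_{ω,1} / ω(S_{l-1}). Squaring and summing
over S_l yields ‖x_{S_l}‖₂ ≤ √ω(S_l) ‖x_{S_{l-1}}‖_{ω,1} / ω(S_{l-1}), and the block sizes
ω(S_l) ≤ s ≤ 2 ω(S_{l-1}) (the latter since ω(S_{l-1}) ≥ s - M² and M² ≤ s/2) turn the factor
into 2/√s.
-/

theorem l2_restr {n : ℕ} (S : Finset (Fin n)) (x : Fin n → ℂ) :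
    l2 (restr S x) = √(∑ j ∈ S, ‖x j‖ ^ 2) := by
  simp [l2, restr, apply_ite, sum_ite_mem]

theorem wl1_restr {n : ℕ} (ω : Fin n → ℝ) (S : Finset (Fin n)) (x : Fin n → ℂ) :
    wl1 ω (restr S x) = ∑ j ∈ S, ‖x j‖ * ω j := by
  simp [wl1, restr, apply_ite, ite_mul, sum_ite_mem]

section

variable {ι : Type*} {a ω : ι → ℝ}

theorem mul_sum_sq_le_mul_sum_mul (T : Finset ι) {c w : ℝ} (hw : 0 < w)
    (hω : ∀ k ∈ T, 0 < ω k) (h : ∀ k ∈ T, c / w ≤ a k / ω k) :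
    c * ∑ k ∈ T, ω k ^ 2 ≤ w * ∑ k ∈ T, a k * ω k := by
  rw [mul_sum, mul_sum]
  refine sum_le_sum fun k hk => ?_
  have hck : c * ω k ≤ a k * w := (div_le_div_iff₀ hw (hω k hk)).1 (h k hk)
  nlinarith [hω k hk]

theorem sum_sq_le_sum_sq_mul_sq (S : Finset ι) {B : ℝ} (ha : ∀ j ∈ S, 0 ≤ a j)
    (h : ∀ j ∈ S, a j ≤ ω j * B) :
    ∑ j ∈ S, a j ^ 2 ≤ (∑ j ∈ S, ω j ^ 2) * B ^ 2 := by
  rw [sum_mul]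
  refine sum_le_sum fun j hj => ?_
  rw [← mul_pow]
  exact pow_le_pow_left₀ (ha j hj) (h j hj) 2

theorem sqrt_sum_sq_le_of_forall_div_le (S T : Finset ι) {s : ℝ} (hω : ∀ i, 0 < ω i)
    (ha : ∀ i, 0 ≤ a i) (hS : ∑ j ∈ S, ω j ^ 2 ≤ s) (hT : s ≤ 2 * ∑ k ∈ T, ω k ^ 2)
    (h : ∀ j ∈ S, ∀ k ∈ T, a j / ω j ≤ a k / ω k) :
    √(∑ j ∈ S, a j ^ 2) ≤ 2 / √s * ∑ k ∈ T, a k * ω k := by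
  set A := ∑ k ∈ T, a k * ω k
  set t := ∑ k ∈ T, ω k ^ 2
  have hA : 0 ≤ A := sum_nonneg fun k _ => mul_nonneg (ha k) (hω k).le
  rcases S.eq_empty_or_nonempty with rfl | hne
  · simp only [sum_empty, Real.sqrt_zero]
    positivity
  have hs : 0 < s := (sum_pos (fun j _ => pow_pos (hω j) 2) hne).trans_le hS
  have ht : 0 < t := by linarith
  have hbound : ∀ j ∈ S, a j ≤ ω j * (A / t) := fun j hj => by
    rw [mul_div_assoc', le_div_iff₀ ht]
    exact mul_sum_sq_le_mul_sum_mul T (hω j) (fun k _ => hω k) (h j hj)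
  have hfactor : √s / t ≤ 2 / √s := by
    rw [div_le_div_iff₀ ht (Real.sqrt_pos.2 hs), Real.mul_self_sqrt hs.le]
    linarith
  calc √(∑ j ∈ S, a j ^ 2) ≤ √(s * (A / t) ^ 2) :=
        Real.sqrt_le_sqrt ((sum_sq_le_sum_sq_mul_sq S (fun j _ => ha j) hbound).trans
          (mul_le_mul_of_nonneg_right hS (sq_nonneg _)))
    _ = √s / t * A := by rw [Real.sqrt_mul hs.le, Real.sqrt_sq (by positivity)]; ring
    _ ≤ 2 / √s * A := mul_le_mul_of_nonneg_right hfactor hA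

end

theorem weighted_block_tail_bound_general {N : ℕ} (ω : Fin N → ℝ) (hω : ∀ j, 1 ≤ ω j)
    (M s : ℝ) (hs : 2 * M ^ 2 ≤ s)
    (p : ℕ) (S : ℕ → Finset (Fin N))
    (hblocks : ∀ l, l < p → s - M ^ 2 ≤ wcard ω (S l) ∧ wcard ω (S l) ≤ s)
    (x : Fin N → ℂ)
    (hrearr : ∀ l, 1 ≤ l → l < p → ∀ j ∈ S l, ∀ k ∈ S (l - 1),
      ‖x j‖ * (ω j)⁻¹ ≤ ‖x k‖ * (ω k)⁻¹) :
    ∀ l, 1 ≤ l → l < p →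
      l2 (restr (S l) x) ≤ (2 / Real.sqrt s) * wl1 ω (restr (S (l - 1)) x) := by
  intro l hl hlp
  have hprev := (hblocks (l - 1) (by omega)).1
  rw [l2_restr, wl1_restr]
  refine sqrt_sum_sq_le_of_forall_div_le (S l) (S (l - 1)) (fun j => one_pos.trans_le (hω j))
    (fun j => norm_nonneg (x j)) (hblocks l hlp).2 ?_ ?_
  · rw [wcard] at hprev
    linarith
  · simpa only [div_eq_mul_inv] using hrearr l hl hlp

/-- for a partition into weighted blocks formed by nonincreasing
rearrangement of |x_j|/ω_j, consecutive blocks satisfy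
‖x_{S_l}‖₂ ≤ (2/√s)‖x_{S_{l−1}}‖_{ω,1}. -/
theorem weighted_block_tail_bound {N : ℕ} (ω : Fin N → ℝ) (hω : ∀ j, 1 ≤ ω j)
    (M s : ℝ) (hM : ∀ j, ω j ≤ M) (hs : 2 * M ^ 2 ≤ s)
    (p : ℕ) (S : ℕ → Finset (Fin N))
    (hdisj : ∀ i j, i < p → j < p → i ≠ j → Disjoint (S i) (S j))
    (hblocks : ∀ l, l < p → s - M ^ 2 ≤ wcard ω (S l) ∧ wcard ω (S l) ≤ s)
    (x : Fin N → ℂ)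
    (hrearr : ∀ l, 1 ≤ l → l < p → ∀ j ∈ S l, ∀ k ∈ S (l - 1),
      ‖x j‖ * (ω j)⁻¹ ≤ ‖x k‖ * (ω k)⁻¹) :
    ∀ l, 1 ≤ l → l < p →
      l2 (restr (S l) x) ≤ (2 / Real.sqrt s) * wl1 ω (restr (S (l - 1)) x) :=
  weighted_block_tail_bound_general ω hω M s hs p S hblocks x hrearr
end
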